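/- For any two objects M and N of 𝒟: M∗[T[1]] ⊆ N∗[T[1]] in 𝒟 if and only if Fac Hom_𝒟(T, M′) ⊆ Fac Hom_𝒟(T, N′) in mod Λ. In particular, the bijection X ↦ X̃ between basic T[1]-cluster tilting objects of 𝒟 and basic support τ-tilting Λ-modules is an isomorphism of partially ordered sets, where T[1]-cluster tilting objects are ordered by M ≥ N iff M∗[T[1]] ⊇ N∗[T[1]] and support τ-tilting modules by M ≥ N iff Fac M ⊇ Fac N. -/

import Mathlib

/- Common definitions for formalizing "Relative cluster tilting objects in
triangulated categories" (Yang–Zhu). -/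

open CategoryTheory CategoryTheory.Limits CategoryTheory.Pretriangulated

universe w v u

attribute [local instance] CategoryTheory.Limits.hasBinaryBiproducts_of_finite_biproducts

namespace RelCT

section CatDefs

variable {C : Type u} [Category.{v} C]

/-- `Y` is a direct summand of `X`. -/
def IsSummand (Y X : C) : Prop := ∃ (i : Y ⟶ X) (p : X ⟶ Y), i ≫ p = 𝟙 Y

variable [Preadditive C] [HasFiniteBiproducts C]

/-- `X` belongs to `add M`: it is a direct summand of a finite direct sum of copies of `M`. -/
def InAdd (M X : C) : Prop := ∃ n : ℕ, IsSummand X (⨁ (fun _ : Fin n => M))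

/-- `X` is indecomposable. -/
def Indec (X : C) : Prop := ¬ IsZero X ∧ ∀ (Y Z : C), (X ≅ Y ⊞ Z) → IsZero Y ∨ IsZero Z

/-- The setoid of indecomposable direct summands of `X` up to isomorphism. -/
def summandSetoid (X : C) : Setoid {Y : C // Indec Y ∧ IsSummand Y X} where
  r A B := Nonempty (A.1 ≅ B.1)
  iseqv := ⟨fun A => ⟨Iso.refl _⟩, fun h => h.elim fun e => ⟨e.symm⟩,
    fun h1 h2 => h1.elim fun e1 => h2.elim fun e2 => ⟨e1.trans e2⟩⟩

/-- `|X|`: the number of non-isomorphic indecomposable direct summands of `X`. -/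
noncomputable def numIndec (X : C) : ℕ := Nat.card (Quotient (summandSetoid X))

/-- `X` is basic: it has no repeated indecomposable direct summands; equivalently (under
Krull–Schmidt), no direct summand of the form `Y ⊞ Y` with `Y ≠ 0`. -/
def IsBasic (X : C) : Prop := ∀ Y : C, ¬ IsZero Y → ¬ IsSummand (Y ⊞ Y) X

/-- `f` factors through an object of `add M`. -/
def FactorsThruAdd (M : C) {X Y : C} (f : X ⟶ Y) : Prop :=
  ∃ (Z : C) (g : X ⟶ Z) (h : Z ⟶ Y), InAdd M Z ∧ f = g ≫ h

/-- Krull–Schmidt property: every object is a finite biproduct of objects with local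
endomorphism rings. -/
def KrullSchmidt (C : Type u) [Category.{v} C] [Preadditive C] [HasFiniteBiproducts C] : Prop :=
  ∀ X : C, ∃ (n : ℕ) (f : Fin n → C) (_ : X ≅ ⨁ f), ∀ i, IsLocalRing (End (f i))

section LinearDefs

variable (k : Type w) [Field k] [CategoryTheory.Linear k C]

/-- The ideal `[M](X, Y)`: the subgroup of `Hom(X, Y)` of morphisms factoring through `add M`
(realized as the `k`-span of the set of such morphisms, which coincides with that set). -/
def idealSubmodule (M X Y : C) : Submodule k (X ⟶ Y) :=
  Submodule.span k {f : X ⟶ Y | FactorsThruAdd M f}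

lemma mem_ideal_of_factors {M X Y : C} {f : X ⟶ Y} (h : FactorsThruAdd M f) :
    f ∈ idealSubmodule k M X Y := Submodule.subset_span h

lemma ideal_precomp {M X X' Y : C} (f : X ⟶ X') {g : X' ⟶ Y}
    (hg : g ∈ idealSubmodule k M X' Y) : f ≫ g ∈ idealSubmodule k M X Y := by
  induction hg using Submodule.span_induction with
  | mem a ha =>
      obtain ⟨Z, u, v, hZ, rfl⟩ := ha
      exact Submodule.subset_span ⟨Z, f ≫ u, v, hZ, by simp⟩
  | zero =>
      rw [comp_zero]
      exact Submodule.zero_mem _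
  | add a b ha hb h1 h2 =>
      rw [Preadditive.comp_add]
      exact Submodule.add_mem _ h1 h2
  | smul c a ha h1 =>
      rw [CategoryTheory.Linear.comp_smul]
      exact Submodule.smul_mem _ c h1

lemma ideal_postcomp {M X Y Y' : C} {g : X ⟶ Y} (f : Y ⟶ Y')
    (hg : g ∈ idealSubmodule k M X Y) : g ≫ f ∈ idealSubmodule k M X Y' := by
  induction hg using Submodule.span_induction with
  | mem a ha =>
      obtain ⟨Z, u, v, hZ, rfl⟩ := ha
      exact Submodule.subset_span ⟨Z, u, v ≫ f, hZ, by simp⟩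
  | zero =>
      rw [zero_comp]
      exact Submodule.zero_mem _
  | add a b ha hb h1 h2 =>
      rw [Preadditive.add_comp]
      exact Submodule.add_mem _ h1 h2
  | smul c a ha h1 =>
      rw [CategoryTheory.Linear.smul_comp]
      exact Submodule.smul_mem _ c h1

/-- A Serre functor on a `k`-linear category: an autoequivalence `S` together with
bifunctorial isomorphisms `Hom(X, Y) ≅ D Hom(Y, S X)`. -/
structure SerreData : Type (max (max u (v + 1)) w) where
  S : C ≌ C
  ε : ∀ (X Y : C), (X ⟶ Y) ≃ₗ[k] Module.Dual k (Y ⟶ S.functor.obj X)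
  natX : ∀ {X X' Y : C} (f : X ⟶ X') (u : X' ⟶ Y) (v : Y ⟶ S.functor.obj X),
    ε X Y (f ≫ u) v = ε X' Y u (v ≫ S.functor.map f)
  natY : ∀ {X Y Y' : C} (u : X ⟶ Y) (g : Y ⟶ Y') (v : Y' ⟶ S.functor.obj X),
    ε X Y' (u ≫ g) v = ε X Y u (g ≫ v)

end LinearDefs

section ShiftDefs

variable [HasShift C ℤ]

/-- `X` is `T[1]`-rigid: every morphism `X → X[1]` factoring through `add T[1]` vanishes. -/
def IsRelRigid (T X : C) : Prop :=
  ∀ f : X ⟶ X⟦(1:ℤ)⟧, FactorsThruAdd (T⟦(1:ℤ)⟧) f → f = 0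

/-- `T` is a cluster-tilting object. -/
def IsClusterTilting (T : C) : Prop :=
  (∀ X : C, InAdd T X ↔ ∀ f : T ⟶ X⟦(1:ℤ)⟧, f = 0) ∧
  (∀ X : C, InAdd T X ↔ ∀ f : X ⟶ T⟦(1:ℤ)⟧, f = 0)

/-- `X` is `T[1]`-cluster tilting. -/
def IsRelCT (T X : C) : Prop := IsRelRigid T X ∧ numIndec X = numIndec T

/-- `X` is almost `T[1]`-cluster tilting. -/
def IsAlmostRelCT (T X : C) : Prop := IsRelRigid T X ∧ numIndec X = numIndec T - 1

end ShiftDefs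

end CatDefs

section Lam

variable {C : Type u} [Category.{v} C] [Preadditive C]

/-- The algebra `Λ = End(T)ᵒᵖ`. -/
abbrev Lam (T : C) : Type v := (End T)ᵐᵒᵖ

instance lamSMul (T X : C) : SMul (Lam T) (T ⟶ X) := ⟨fun r f => r.unop ≫ f⟩

lemma lam_smul_def {T X : C} (r : Lam T) (f : T ⟶ X) : r • f = r.unop ≫ f := rfl

instance lamMulAction (T X : C) : MulAction (Lam T) (T ⟶ X) where
  one_smul f := Category.id_comp f
  mul_smul r s f := by
    show (r * s).unop ≫ f = r.unop ≫ (s.unop ≫ f)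
    rw [MulOpposite.unop_mul, End.mul_def, Category.assoc]

instance lamDistribMulAction (T X : C) : DistribMulAction (Lam T) (T ⟶ X) where
  smul_zero r := comp_zero
  smul_add r f g := Preadditive.comp_add _ _ _ _ _ _

instance lamModule (T X : C) : Module (Lam T) (T ⟶ X) where
  add_smul r s f := by
    show (r + s).unop ≫ f = r.unop ≫ f + s.unop ≫ f
    rw [MulOpposite.unop_add, Preadditive.add_comp]
  zero_smul f := zero_comp

/-- The `Λ`-module `Hom_𝒟(T, X)`. -/
noncomputable abbrev Hmod (T X : C) : ModuleCat.{v} (Lam T) := ModuleCat.of (Lam T) (T ⟶ X)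

end Lam

section ModDefs

variable {R : Type v} [Ring R]

/-- A projective presentation `P1 → P0 → M → 0` (with finitely generated projectives). -/
structure ProjPres (M : ModuleCat.{v} R) where
  P1 : ModuleCat.{v} R
  P0 : ModuleCat.{v} R
  fg1 : Module.Finite R P1
  fg0 : Module.Finite R P0
  proj1 : Projective P1
  proj0 : Projective P0
  p : P1 ⟶ P0
  q : P0 ⟶ M
  surj : Function.Surjective q
  exct : LinearMap.range p.hom = LinearMap.ker q.hom

/-- Minimality of a projective presentation: both `q : P0 → M` and the corestriction
`P1 → ker q` of `p` are projective covers. -/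
def ProjPres.Minimal {M : ModuleCat.{v} R} (pr : ProjPres M) : Prop :=
  (∀ K : Submodule R pr.P0, K.map pr.q.hom = ⊤ → K = ⊤) ∧
  (∀ K : Submodule R pr.P1, K.map pr.p.hom = LinearMap.range pr.p.hom → K = ⊤)

/-- `M` is `τ`-rigid, characterized via a minimal projective presentation `P1 →p P0 → M → 0`:
`Hom(M, τM) = 0` iff `Hom(p, M)` is surjective. -/
def IsTauRigid (M : ModuleCat.{v} R) : Prop :=
  ∃ pr : ProjPres M, pr.Minimal ∧ ∀ h : pr.P1 ⟶ M, ∃ g : pr.P0 ⟶ M, pr.p ≫ g = h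

/-- `(M, P)` is a `τ`-rigid pair. -/
def IsTauRigidPair (M P : ModuleCat.{v} R) : Prop :=
  IsTauRigid M ∧ Projective P ∧ ∀ f : P ⟶ M, f = 0

/-- `(M, P)` is a support `τ`-tilting pair. -/
noncomputable def IsSuppTauTiltingPair (M P : ModuleCat.{v} R) : Prop :=
  IsTauRigidPair M P ∧ numIndec M + numIndec P = numIndec (ModuleCat.of R R)

/-- `M` is a support `τ`-tilting module. -/
noncomputable def IsSuppTauTilting (M : ModuleCat.{v} R) : Prop :=
  ∃ P : ModuleCat.{v} R, Module.Finite R P ∧ IsBasic P ∧ IsSuppTauTiltingPair M P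

/-- `M` is a `τ`-tilting module. -/
noncomputable def IsTauTilting (M : ModuleCat.{v} R) : Prop :=
  IsTauRigid M ∧ numIndec M = numIndec (ModuleCat.of R R)

/-- `W` lies in `Fac M`. -/
def InFac (M W : ModuleCat.{v} R) : Prop :=
  ∃ (n : ℕ) (φ : (Fin n → M) →ₗ[R] W), Function.Surjective φ

end ModDefs

end RelCT

namespace RelCT

section MoreCatDefs

variable {C : Type u} [Category.{v} C] [Preadditive C] [HasFiniteBiproducts C] [HasShift C ℤ]

/-- `X` has no nonzero direct summand in `add T[1]`. -/
def NoT1Summand (T X : C) : Prop :=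
  ∀ W : C, IsSummand W X → InAdd (T⟦(1:ℤ)⟧) W → IsZero W

/-- A decomposition `X ≅ X' ⊞ X''` where `X''` is a maximal direct summand of `X`
belonging to `add T[1]`. -/
def MaxDecomp (T X X' X'' : C) : Prop :=
  Nonempty (X ≅ X' ⊞ X'') ∧ InAdd (T⟦(1:ℤ)⟧) X'' ∧ NoT1Summand T X'

/-- The factorization ideal `I_X ⊆ End(T[1])ᵒᵖ` vanishes: every endomorphism of `T[1]`
factoring through `X` is zero. -/
def FactIdealZero (T X : C) : Prop :=
  ∀ f : T⟦(1:ℤ)⟧ ⟶ T⟦(1:ℤ)⟧, (∃ (g : T⟦(1:ℤ)⟧ ⟶ X) (h : X ⟶ T⟦(1:ℤ)⟧), f = g ≫ h) → f = 0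

/-- `X` is a maximal rigid object. -/
def IsMaxRigid (X : C) : Prop :=
  (∀ f : X ⟶ X⟦(1:ℤ)⟧, f = 0) ∧
  ∀ Y : C, (InAdd X Y ↔ ∀ f : (X ⊞ Y) ⟶ (X ⊞ Y)⟦(1:ℤ)⟧, f = 0)

/-- `f : U1 → X` is a minimal right `add U`-approximation of `X`. -/
def IsMinRightApprox (U : C) {U1 X : C} (f : U1 ⟶ X) : Prop :=
  InAdd U U1 ∧ (∀ (U0 : C), InAdd U U0 → ∀ g : U0 ⟶ X, ∃ h : U0 ⟶ U1, h ≫ f = g) ∧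
  (∀ e : U1 ⟶ U1, e ≫ f = f → IsIso e)

/-- `g : X → U2` is a minimal left `add U`-approximation of `X`. -/
def IsMinLeftApprox (U : C) {X U2 : C} (g : X ⟶ U2) : Prop :=
  InAdd U U2 ∧ (∀ (U0 : C), InAdd U U0 → ∀ u : X ⟶ U0, ∃ h : U2 ⟶ U0, g ≫ h = u) ∧
  (∀ e : U2 ⟶ U2, g ≫ e = g → IsIso e)

end MoreCatDefs

section Tau

variable {k : Type w} [Field k] {C : Type u} [Category.{v} C] [Preadditive C]
  [CategoryTheory.Linear k C] [HasShift C ℤ]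

/-- The Auslander–Reiten translation `τ_𝒟 = 𝕊 ∘ [-1]` associated to a Serre functor. -/
abbrev tauD (SD : SerreData k (C := C)) (X : C) : C := (SD.S.functor.obj X)⟦(-1:ℤ)⟧

/-- The inverse Auslander–Reiten translation `τ_𝒟⁻¹ = 𝕊⁻¹ ∘ [1]`. -/
abbrev tauInvD (SD : SerreData k (C := C)) (Y : C) : C := SD.S.inverse.obj (Y⟦(1:ℤ)⟧)

end Tau

section Star

variable {C : Type u} [Category.{v} C] [HasZeroObject C] [Preadditive C] [HasShift C ℤ]
  [∀ n : ℤ, (CategoryTheory.shiftFunctor C n).Additive] [Pretriangulated C]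
  [HasFiniteBiproducts C]

/-- `X` belongs to the subcategory `M ∗ [T[1]]`: there is a triangle
`M_X → X → C_X → M_X[1]` with `M_X ∈ add M` and `X → C_X` factoring through `add T[1]`. -/
def MemStar (T M X : C) : Prop :=
  ∃ (A B : C) (a : A ⟶ X) (b : X ⟶ B) (c : B ⟶ A⟦(1:ℤ)⟧),
    InAdd M A ∧ FactorsThruAdd (T⟦(1:ℤ)⟧) b ∧ Triangle.mk a b c ∈ distTriang C

/-- `X` is a `T[1]`-projective object of the subcategory `M ∗ [T[1]]`. -/
def IsRelProjInStar (T M X : C) : Prop :=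
  MemStar T M X ∧
  ∀ Y : C, MemStar T M Y → ∀ f : X ⟶ Y⟦(1:ℤ)⟧, FactorsThruAdd (T⟦(1:ℤ)⟧) f → f = 0

/-- `N` is (up to isomorphism) `P_{T[1]}(M ∗ [T[1]])`: the direct sum of one copy of each of the
indecomposable `T[1]`-projective objects of `M ∗ [T[1]]`. -/
def IsPTGen (T M N : C) : Prop :=
  IsBasic N ∧ ∀ Y : C, Indec Y → (IsSummand Y N ↔ IsRelProjInStar T M Y)

end Star

section MoreModDefs

variable {R : Type v} [Ring R]

/-- `M` has projective dimension at most one. -/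
def HasPdLeOne (M : ModuleCat.{v} R) : Prop := ∃ pr : ProjPres M, Function.Injective pr.p

/-- `Ext¹(M, M) = 0`: every self-extension of `M` splits. -/
def SelfExtFree (M : ModuleCat.{v} R) : Prop :=
  ∀ (E : ModuleCat.{v} R) (i : M ⟶ E) (q : E ⟶ M), Function.Injective i →
    Function.Surjective q → LinearMap.range i.hom = LinearMap.ker q.hom → ∃ r : E ⟶ M, i ≫ r = 𝟙 M

/-- `M` is a tilting module: projective dimension at most one, no self-extensions,
and `|M| = |R|`. -/
noncomputable def IsTilting (M : ModuleCat.{v} R) : Prop :=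
  HasPdLeOne M ∧ SelfExtFree M ∧ numIndec M = numIndec (ModuleCat.of R R)

end MoreModDefs

end RelCT

open CategoryTheory CategoryTheory.Limits CategoryTheory.Pretriangulated RelCT

/-!
Because `T` is cluster tilting, a morphism `b : X ⟶ B` factors through `add T[1]` exactly when
`Hom(T, b) = 0`: complete a right `add T`-approximation of `X` to a triangle, whose cone lies in
`add T[1]`, and factor `b` through it. By the exact sequence of the triangle defining
`M ∗ [T[1]]`, `X` lies there iff some `A ∈ add M` maps to `X` inducing a surjection on
`Hom(T, -)`. As `Hom(T, M'') = 0` and `Hom(T, -)` is full (a `Λ`-linear map out of `Hom(T, A)` is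
first realised on the approximation `Tʳ ⟶ A`, then descends along it), this says
`Hom(T, X) ∈ Fac Hom(T, M')`. The two inclusions thus translate into each other; the order
statement is the same with `M` and `N` exchanged.
-/

namespace RelCT

section Summands

variable {C : Type u} [Category.{v} C]

lemma isSummand_refl (X : C) : IsSummand X X := ⟨𝟙 X, 𝟙 X, Category.id_comp _⟩

lemma IsSummand.trans {X Y Z : C} (h₁ : IsSummand X Y) (h₂ : IsSummand Y Z) :
    IsSummand X Z := by
  obtain ⟨i, p, hip⟩ := h₁
  obtain ⟨j, q, hjq⟩ := h₂
  exact ⟨i ≫ j, q ≫ p, by simp [reassoc_of% hjq, hip]⟩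

lemma IsSummand.map {D : Type*} [Category D] (F : C ⥤ D) {X Y : C} (h : IsSummand X Y) :
    IsSummand (F.obj X) (F.obj Y) := by
  obtain ⟨i, p, hip⟩ := h
  exact ⟨F.map i, F.map p, by rw [← F.map_comp, hip, F.map_id]⟩

variable [Preadditive C] [HasFiniteBiproducts C]

lemma IsSummand.biproduct {n : ℕ} {f g : Fin n → C} (h : ∀ j, IsSummand (f j) (g j)) :
    IsSummand (⨁ f) (⨁ g) := by
  choose i p hip using h
  refine ⟨biproduct.map i, biproduct.map p, biproduct.hom_ext _ _ fun j => ?_⟩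
  simp [hip]

lemma isSummand_map_biproduct {D : Type*} [Category D] [Preadditive D] [HasFiniteBiproducts D]
    (F : C ⥤ D) [F.Additive] {n : ℕ} (f : Fin n → C) :
    IsSummand (F.obj (⨁ f)) (⨁ fun j => F.obj (f j)) :=
  ⟨biproduct.lift fun j => F.map (biproduct.π f j),
    biproduct.desc fun j => F.map (biproduct.ι f j), by
      simp only [biproduct.lift_desc, ← F.map_comp, ← F.map_sum, biproduct.total, F.map_id]⟩

lemma IsSummand.inAdd {X M : C} (h : IsSummand X M) : InAdd M X :=
  ⟨1, h.trans ⟨biproduct.ι (fun _ : Fin 1 => M) 0, biproduct.π _ 0, biproduct.ι_π_self _ 0⟩⟩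

lemma InAdd.map {D : Type*} [Category D] [Preadditive D] [HasFiniteBiproducts D]
    (F : C ⥤ D) [F.Additive] {M X : C} (h : InAdd M X) : InAdd (F.obj M) (F.obj X) := by
  obtain ⟨n, hX⟩ := h
  exact ⟨n, (hX.map F).trans (isSummand_map_biproduct F _)⟩

lemma eq_zero_of_inAdd_target {T M Z : C} (hM : ∀ f : T ⟶ M, f = 0) (hZ : InAdd M Z)
    (f : T ⟶ Z) : f = 0 := by
  obtain ⟨n, i, p, hip⟩ := hZ
  have hfi : f ≫ i = 0 := biproduct.hom_ext _ _ fun j => by simp [hM]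
  rw [← Category.comp_id f, ← hip, reassoc_of% hfi, zero_comp]

lemma eq_zero_of_inAdd_source {T Y X : C} (hY : InAdd T Y) {h : Y ⟶ X}
    (hh : ∀ t : T ⟶ Y, t ≫ h = 0) : h = 0 := by
  obtain ⟨n, i, p, hip⟩ := hY
  have hph : p ≫ h = 0 := biproduct.hom_ext' _ _ fun j => by
    rw [comp_zero, ← Category.assoc]
    exact hh _
  rw [← Category.id_comp h, ← hip, Category.assoc, hph, comp_zero]

end Summands

section HomModule

variable {C : Type u} [Category.{v} C] [Preadditive C] (T : C)

def homMap {A X : C} (f : A ⟶ X) : (T ⟶ A) →ₗ[Lam T] (T ⟶ X) where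
  toFun t := t ≫ f
  map_add' _ _ := Preadditive.add_comp _ _ _ _ _ _
  map_smul' _ _ := Category.assoc _ _ _

@[simp] lemma homMap_apply {A X : C} (f : A ⟶ X) (t : T ⟶ A) : homMap T f t = t ≫ f := rfl

lemma homMap_comp {A B X : C} (f : A ⟶ B) (g : B ⟶ X) :
    homMap T (f ≫ g) = homMap T g ∘ₗ homMap T f :=
  LinearMap.ext fun _ => (Category.assoc _ _ _).symm

lemma surjective_homMap_of_comp_eq_id {A X : C} {i : X ⟶ A} {p : A ⟶ X} (hip : i ≫ p = 𝟙 X) :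
    Function.Surjective (homMap T p) :=
  fun t => ⟨t ≫ i, by simp [hip]⟩

lemma module_finite_hom (k : Type w) [Semiring k] [Linear k C] (X : C) [Module.Finite k (T ⟶ X)] :
    Module.Finite (Lam T) (T ⟶ X) := by
  obtain ⟨n, s, hs⟩ := Module.Finite.exists_fin (R := k) (M := T ⟶ X)
  rw [Module.finite_def, Submodule.fg_def]
  refine ⟨Set.range s, Set.finite_range s, Submodule.eq_top_iff'.2 fun x => ?_⟩
  have hx : x ∈ Submodule.span k (Set.range s) := hs ▸ Submodule.mem_top
  induction hx using Submodule.span_induction with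
  | mem a ha => exact Submodule.subset_span ha
  | zero => exact Submodule.zero_mem _
  | add a b _ _ ha hb => exact Submodule.add_mem _ ha hb
  | smul c a _ ha =>
      have hca : c • a = (MulOpposite.op (c • 𝟙 T) : Lam T) • a := by
        rw [lam_smul_def, MulOpposite.unop_op, Linear.smul_comp, Category.id_comp]
      exact hca ▸ Submodule.smul_mem _ _ ha

variable [HasFiniteBiproducts C]

lemma surjective_homMap_biprod_inl {X Y : C} (hY : ∀ f : T ⟶ Y, f = 0) :
    Function.Surjective (homMap T (biprod.inl : X ⟶ X ⊞ Y)) :=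
  fun t => ⟨t ≫ biprod.fst, by ext <;> simp [hY (t ≫ biprod.snd)]⟩

noncomputable def homBiproductEquiv (M : C) (n : ℕ) :
    (T ⟶ ⨁ fun _ : Fin n => M) ≃ₗ[Lam T] (Fin n → (T ⟶ M)) where
  toFun t j := t ≫ biproduct.π _ j
  invFun := biproduct.lift
  map_add' _ _ := funext fun _ => Preadditive.add_comp _ _ _ _ _ _
  map_smul' _ _ := funext fun _ => Category.assoc _ _ _
  left_inv _ := biproduct.hom_ext _ _ fun _ => biproduct.lift_π _ _
  right_inv _ := funext fun _ => biproduct.lift_π _ _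

lemma inFac_hmod_of_inAdd {M A : C} (h : InAdd M A) : InFac (Hmod T M) (Hmod T A) := by
  obtain ⟨n, i, p, hip⟩ := h
  exact ⟨n, homMap T p ∘ₗ (homBiproductEquiv T M n).symm.toLinearMap,
    (surjective_homMap_of_comp_eq_id T hip).comp (LinearEquiv.surjective _)⟩

lemma homMap_biproduct_desc {X : C} {n : ℕ}
    (φ : (T ⟶ ⨁ fun _ : Fin n => T) →ₗ[Lam T] (T ⟶ X)) :
    homMap T (biproduct.desc fun j => φ (biproduct.ι (fun _ : Fin n => T) j)) = φ := by
  ext s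
  have hs : ∑ j, (MulOpposite.op (s ≫ biproduct.π _ j) : Lam T) •
      biproduct.ι (fun _ : Fin n => T) j = s := by
    simp only [lam_smul_def, MulOpposite.unop_op, Category.assoc, ← Preadditive.comp_sum,
      biproduct.total, Category.comp_id]
  calc s ≫ biproduct.desc _
      = ∑ j, (MulOpposite.op (s ≫ biproduct.π _ j) : Lam T) •
          φ (biproduct.ι (fun _ : Fin n => T) j) := by
        simp only [biproduct.desc_eq, Preadditive.comp_sum, lam_smul_def, MulOpposite.unop_op,
          Category.assoc]
    _ = φ s := by
        conv_rhs => rw [← hs]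
        simp only [map_sum, map_smul]

end HomModule

section Fac

variable {R : Type v} [Ring R]

lemma InFac.of_surjective {M W : ModuleCat.{v} R} (f : M →ₗ[R] W) (hf : Function.Surjective f) :
    InFac M W :=
  ⟨1, f ∘ₗ LinearMap.proj 0, fun w => (hf w).elim fun m hm => ⟨fun _ => m, hm⟩⟩

lemma InFac.refl (M : ModuleCat.{v} R) : InFac M M :=
  .of_surjective LinearMap.id Function.surjective_id

lemma InFac.trans {M N W : ModuleCat.{v} R} (hMN : InFac M N) (hNW : InFac N W) : InFac M W := by
  obtain ⟨m, φ, hφ⟩ := hMN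
  obtain ⟨n, ψ, hψ⟩ := hNW
  let e := (LinearEquiv.funCongrLeft R M finProdFinEquiv).trans
    (LinearEquiv.curry R M (Fin n) (Fin m))
  have hφn : Function.Surjective (LinearMap.piMap fun _ : Fin n => φ) :=
    Function.Surjective.piMap fun _ => hφ
  exact ⟨n * m, ψ ∘ₗ LinearMap.piMap (fun _ => φ) ∘ₗ e.toLinearMap,
    hψ.comp (hφn.comp e.surjective)⟩

end Fac

section ClusterTilting

variable {C : Type u} [Category.{v} C] [Preadditive C] [HasShift C ℤ] [HasFiniteBiproducts C]
  {T : C}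

lemma IsClusterTilting.hom_shift_eq_zero (hT : IsClusterTilting T) (f : T ⟶ T⟦(1:ℤ)⟧) : f = 0 :=
  (hT.1 T).1 (isSummand_refl T).inAdd f

lemma IsClusterTilting.inAdd_shift_neg_one (hT : IsClusterTilting T) {Z : C}
    (hZ : ∀ f : T ⟶ Z, f = 0) : InAdd T (Z⟦(-1:ℤ)⟧) :=
  (hT.1 _).2 fun f => (cancel_mono ((shiftFunctorCompIsoId C (-1:ℤ) 1 (by norm_num)).app Z).hom).1
    (by simp [hZ])

end ClusterTilting

section Triangulated

variable {C : Type u} [Category.{v} C] [HasZeroObject C] [Preadditive C] [HasShift C ℤ]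
  [∀ n : ℤ, (shiftFunctor C n).Additive] [Pretriangulated C] [HasFiniteBiproducts C] {T : C}

lemma IsClusterTilting.exists_approximation_triangle (hT : IsClusterTilting T) (X : C)
    [Module.Finite (Lam T) (T ⟶ X)] :
    ∃ (r : ℕ) (g : (⨁ fun _ : Fin r => T) ⟶ X) (Z : C) (h : X ⟶ Z)
      (c : Z ⟶ (⨁ fun _ : Fin r => T)⟦(1:ℤ)⟧),
      Function.Surjective (homMap T g) ∧ InAdd T (Z⟦(-1:ℤ)⟧) ∧
      Triangle.mk g h c ∈ distTriang C := by
  obtain ⟨r, s, hs⟩ := Module.Finite.exists_fin (R := Lam T) (M := T ⟶ X)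
  have hg : Function.Surjective (homMap T (biproduct.desc s)) := by
    intro t
    obtain ⟨c, rfl⟩ := (Submodule.mem_span_range_iff_exists_fun (Lam T)).1
      (hs ▸ Submodule.mem_top : t ∈ Submodule.span (Lam T) (Set.range s))
    exact ⟨∑ i, (c i).unop ≫ biproduct.ι (fun _ : Fin r => T) i, by simp [lam_smul_def]⟩
  obtain ⟨Z, h, c, hdist⟩ := distinguished_cocone_triangle (biproduct.desc s)
  refine ⟨r, _, Z, h, c, hg, hT.inAdd_shift_neg_one fun f => ?_, hdist⟩
  obtain ⟨t, rfl⟩ := Triangle.coyoneda_exact₃ _ hdist f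
    ((hT.1 _).1 ⟨r, isSummand_refl _⟩ (f ≫ c))
  obtain ⟨u, rfl⟩ := hg t
  have hgh : biproduct.desc s ≫ h = 0 := comp_distTriang_mor_zero₁₂ _ hdist
  show (u ≫ biproduct.desc s) ≫ h = 0
  rw [Category.assoc, hgh, comp_zero]

variable [∀ X : C, Module.Finite (Lam T) (T ⟶ X)]

lemma IsClusterTilting.exists_homMap_eq (hT : IsClusterTilting T) {A X : C}
    (φ : (T ⟶ A) →ₗ[Lam T] (T ⟶ X)) : ∃ f : A ⟶ X, homMap T f = φ := by
  obtain ⟨r, g, Z, h, c, hg, hZ, hdist⟩ := hT.exists_approximation_triangle A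
  set f₀ := biproduct.desc fun j => (φ ∘ₗ homMap T g) (biproduct.ι (fun _ : Fin r => T) j)
  have hf₀ : homMap T f₀ = φ ∘ₗ homMap T g := homMap_biproduct_desc T _
  have hinv := inv_rot_of_distTriang _ hdist
  let p : Z⟦(-1:ℤ)⟧ ⟶ ⨁ fun _ : Fin r => T := (Triangle.mk g h c).invRotate.mor₁
  have hpg : p ≫ g = 0 := comp_distTriang_mor_zero₁₂ _ hinv
  have hpf : p ≫ f₀ = 0 := eq_zero_of_inAdd_source hZ fun t => by
    simpa [hpg] using LinearMap.congr_fun hf₀ (t ≫ p)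
  obtain ⟨f, hf⟩ : ∃ f : A ⟶ X, f₀ = g ≫ f := Triangle.yoneda_exact₂ _ hinv f₀ hpf
  refine ⟨f, LinearMap.ext fun t => ?_⟩
  obtain ⟨u, rfl⟩ := hg t
  simpa [← hf] using LinearMap.congr_fun hf₀ u

lemma IsClusterTilting.factorsThruAdd_shift_iff (hT : IsClusterTilting T) {X B : C} (b : X ⟶ B) :
    FactorsThruAdd (T⟦(1:ℤ)⟧) b ↔ homMap T b = 0 := by
  constructor
  · rintro ⟨Z, u, v, hZ, rfl⟩
    ext t
    simp [← Category.assoc, eq_zero_of_inAdd_target hT.hom_shift_eq_zero hZ (t ≫ u)]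
  · intro hb
    obtain ⟨r, g, Z, h, c, -, hZ, hdist⟩ := hT.exists_approximation_triangle X
    have hgb : g ≫ b = 0 := eq_zero_of_inAdd_source ⟨r, isSummand_refl _⟩ fun t => by
      simpa using LinearMap.congr_fun hb (t ≫ g)
    obtain ⟨w, hw⟩ : ∃ w : Z ⟶ B, b = h ≫ w := Triangle.yoneda_exact₂ _ hdist b hgb
    let e := (shiftFunctorCompIsoId C (-1:ℤ) 1 (by norm_num)).app Z
    exact ⟨_, h ≫ e.inv, e.hom ≫ w, hZ.map (shiftFunctor C (1:ℤ)), by simpa using hw⟩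

lemma IsClusterTilting.memStar_iff_exists_surjective (hT : IsClusterTilting T) (M X : C) :
    MemStar T M X ↔ ∃ (A : C) (a : A ⟶ X), InAdd M A ∧ Function.Surjective (homMap T a) := by
  constructor
  · rintro ⟨A, B, a, b, c, hA, hb, hdist⟩
    refine ⟨A, a, hA, fun t => ?_⟩
    have htb : t ≫ b = 0 := by
      simpa using LinearMap.congr_fun ((hT.factorsThruAdd_shift_iff b).1 hb) t
    obtain ⟨s, hs⟩ := Triangle.coyoneda_exact₂ _ hdist t htb
    exact ⟨s, hs.symm⟩
  · rintro ⟨A, a, hA, ha⟩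
    obtain ⟨B, b, c, hdist⟩ := distinguished_cocone_triangle a
    refine ⟨A, B, a, b, c, hA, (hT.factorsThruAdd_shift_iff b).2 (LinearMap.ext fun t => ?_), hdist⟩
    obtain ⟨s, rfl⟩ := ha t
    have hab : a ≫ b = 0 := comp_distTriang_mor_zero₁₂ _ hdist
    simp [hab]

lemma IsClusterTilting.memStar_iff_inFac (hT : IsClusterTilting T) {M M' M'' : C}
    (hM : MaxDecomp T M M' M'') (X : C) : MemStar T M X ↔ InFac (Hmod T M') (Hmod T X) := by
  obtain ⟨⟨e⟩, hM'', -⟩ := hM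
  rw [hT.memStar_iff_exists_surjective]
  constructor
  · rintro ⟨A, a, hA, ha⟩
    have hM'M : Function.Surjective (homMap T (biprod.inl ≫ e.inv)) := by
      rw [homMap_comp]
      exact (surjective_homMap_of_comp_eq_id T e.hom_inv_id).comp
        (surjective_homMap_biprod_inl T (eq_zero_of_inAdd_target hT.hom_shift_eq_zero hM''))
    exact (InFac.of_surjective _ hM'M).trans
      ((inFac_hmod_of_inAdd T hA).trans (.of_surjective _ ha))
  · rintro ⟨m, φ, hφ⟩
    obtain ⟨f, hf⟩ := hT.exists_homMap_eq (φ ∘ₗ (homBiproductEquiv T M' m).toLinearMap)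
    refine ⟨_, f, ⟨m, IsSummand.biproduct fun _ =>
      ⟨biprod.inl ≫ e.inv, e.hom ≫ biprod.fst, by simp⟩⟩, ?_⟩
    rw [hf]
    exact hφ.comp (LinearEquiv.surjective _)

lemma IsClusterTilting.memStar_subset_iff (hT : IsClusterTilting T) {M M' M'' N N' N'' : C}
    (hM : MaxDecomp T M M' M'') (hN : MaxDecomp T N N' N'') :
    (∀ X, MemStar T M X → MemStar T N X) ↔
      ∀ W : ModuleCat.{v} (Lam T), Module.Finite (Lam T) W →
        InFac (Hmod T M') W → InFac (Hmod T N') W := by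
  refine ⟨fun hMN W _ hW => ?_, fun hMN X hX => ?_⟩
  · have hM'N : InFac (Hmod T N') (Hmod T M') :=
      (hT.memStar_iff_inFac hN M').1 (hMN _ ((hT.memStar_iff_inFac hM M').2 (.refl _)))
    exact hM'N.trans hW
  · exact (hT.memStar_iff_inFac hN X).2 (hMN _ inferInstance ((hT.memStar_iff_inFac hM X).1 hX))

end Triangulated

end RelCT

theorem statement13
    (k : Type w) [Field k]
    {C : Type u} [Category.{v} C] [Preadditive C] [CategoryTheory.Linear k C]
    [HasZeroObject C] [HasShift C ℤ] [∀ n : ℤ, (CategoryTheory.shiftFunctor C n).Additive]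
    [Pretriangulated C] [HasFiniteBiproducts C]
    [∀ X Y : C, Module.Finite k (X ⟶ Y)]
    (hKS : KrullSchmidt C)
    (SD : SerreData k (C := C))
    (T : C) (hT : IsClusterTilting T) :
    ((∀ (M N M' M'' N' N'' : C), MaxDecomp T M M' M'' → MaxDecomp T N N' N'' →
        ((∀ X : C, MemStar T M X → MemStar T N X) ↔
         (∀ W : ModuleCat.{v} (Lam T), Module.Finite (Lam T) ↥W →
            InFac (Hmod T M') W → InFac (Hmod T N') W))) ∧
     (∀ (M N M' M'' N' N'' : C), IsBasic M → IsRelCT T M → IsBasic N → IsRelCT T N →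
        MaxDecomp T M M' M'' → MaxDecomp T N N' N'' →
        ((∀ X : C, MemStar T N X → MemStar T M X) ↔
         (∀ W : ModuleCat.{v} (Lam T), Module.Finite (Lam T) ↥W →
            InFac (Hmod T N') W → InFac (Hmod T M') W)))) := by
  have : ∀ X : C, Module.Finite (Lam T) (T ⟶ X) := fun X => module_finite_hom T k X
  exact ⟨fun _ _ _ _ _ _ hM hN => hT.memStar_subset_iff hM hN,
    fun _ _ _ _ _ _ _ _ _ _ hM hN => hT.memStar_subset_iff hN hM⟩
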